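/- arXiv:1310.1239 — 4 statements merged into one kernel-verified Lean document; each statement's English description precedes it below -/
import Mathlib

section
/- For all nonnegative integers n, HB_n^{(ν,k)}(x) = \sum_{l=0}^{\lfloor n/2 \rfloor} \sum_{j=0}^{n} \left( \sum_{m=j}^{n} \binom{n}{2l} \frac{(2l)!}{l!} (-ν/2)^l \frac{(-1)^j \binom{m}{j}}{(m+1)^k} \right) (x-j)^{n-2l}. -/
open PowerSeries Finset

/-- The power series e^{-t}. -/
noncomputable def expNeg : PowerSeries ℝ := rescale (-1) (PowerSeries.exp ℝ)

/-- Li_k(1-e^{-t})/(1-e^{-t}) = ∑_{m≥0} (1-e^{-t})^m/(m+1)^k as a formal power series. -/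
noncomputable def pbGF (k : ℤ) : PowerSeries ℝ :=
  PowerSeries.mk fun n => ∑ m ∈ Finset.range (n + 1),
    (1 / ((m : ℝ) + 1) ^ k) * PowerSeries.coeff n ((1 - expNeg) ^ m)

/-- The power series e^{-ν t²/2}. -/
noncomputable def hermGF (ν : ℝ) : PowerSeries ℝ :=
  PowerSeries.mk fun n =>
    if Even n then (-ν / 2) ^ (n / 2) / (Nat.factorial (n / 2)) else 0

/-- Hermite and poly-Bernoulli mixed-type polynomials. -/
noncomputable def HB (ν : ℝ) (k : ℤ) (n : ℕ) (x : ℝ) : ℝ :=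
  (Nat.factorial n) *
    PowerSeries.coeff n (hermGF ν * pbGF k * rescale x (PowerSeries.exp ℝ))

/-- Poly-Bernoulli polynomials. -/
noncomputable def pB (k : ℤ) (n : ℕ) (x : ℝ) : ℝ :=
  (Nat.factorial n) * PowerSeries.coeff n (pbGF k * rescale x (PowerSeries.exp ℝ))

/-- Hermite polynomials of order ν. -/
noncomputable def Herm (ν : ℝ) (n : ℕ) (x : ℝ) : ℝ :=
  (Nat.factorial n) * PowerSeries.coeff n (hermGF ν * rescale x (PowerSeries.exp ℝ))

/-- Stirling numbers of the second kind. -/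
def S2 : ℕ → ℕ → ℕ
  | 0, 0 => 1
  | 0, _ + 1 => 0
  | _ + 1, 0 => 0
  | n + 1, m + 1 => (m + 1) * S2 n (m + 1) + S2 n m

/-!
Since `1 - e^{-t}` is divisible by `t`, the coefficients of `Li_k(1-e^{-t})/(1-e^{-t})` up to
degree `N` are those of the polynomial `∑_{m ≤ N} (1-e^{-t})^m/(m+1)^k`, and expanding
`(1-e^{-t})^m e^{xt} = ∑_j (-1)^j C(m,j) e^{(x-j)t}` gives the explicit formula for `pB_p(x)`,
`p ≤ N`. The Hermite factor `e^{-νt²/2}` has only even coefficients `(-ν/2)^l/l!`, so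
`HB_n = ∑_l C(n,2l) (2l)!/l! (-ν/2)^l pB_{n-2l}`, and substituting the formula with `N = n`
gives the theorem.
-/

theorem Finset.sum_range_succ_eq_sum_range_two_mul {M : Type*} [AddCommMonoid M] (f : ℕ → M)
    (hf : ∀ q, Odd q → f q = 0) (n : ℕ) :
    ∑ q ∈ range (n + 1), f q = ∑ l ∈ range (n / 2 + 1), f (2 * l) := by
  rw [← sum_image (g := (2 * ·)) fun a _ b _ h => by simpa using h]
  refine (sum_subset (fun q => by simp only [mem_image, mem_range]; omega) fun q hq hq' => ?_).symm
  refine hf q (Nat.not_even_iff_odd.mp fun ⟨l, hl⟩ => hq' ?_)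
  simp only [mem_image, mem_range] at hq ⊢
  exact ⟨l, by omega, by omega⟩

lemma coeff_rescale_exp {K : Type*} [Field K] [CharZero K] (c : K) (p : ℕ) :
    coeff p (rescale c (exp K)) = c ^ p / p.factorial := by
  simp [coeff_rescale, coeff_exp, div_eq_mul_inv]

lemma X_dvd_one_sub_expNeg : (X : PowerSeries ℝ) ∣ 1 - expNeg := by
  rw [X_dvd_iff, map_sub, map_one, expNeg, ← coeff_zero_eq_constantCoeff_apply, coeff_rescale_exp]
  simp

lemma coeff_one_sub_expNeg_pow_of_lt {i m : ℕ} (h : i < m) : coeff i ((1 - expNeg) ^ m) = 0 :=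
  X_pow_dvd_iff.mp (pow_dvd_pow_of_dvd X_dvd_one_sub_expNeg m) i h

lemma expNeg_pow_mul_rescale_exp (j : ℕ) (x : ℝ) :
    expNeg ^ j * rescale x (exp ℝ) = rescale (x - j) (exp ℝ) := by
  rw [expNeg, ← map_pow, exp_pow_eq_rescale_exp, rescale_rescale, exp_mul_exp_eq_exp_add]
  ring_nf

lemma one_sub_expNeg_pow_mul_rescale_exp (m : ℕ) (x : ℝ) :
    (1 - expNeg) ^ m * rescale x (exp ℝ) =
      ∑ j ∈ range (m + 1), ((-1) ^ j * m.choose j : ℝ) • rescale (x - j) (exp ℝ) := by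
  rw [sub_eq_neg_add, add_pow, sum_mul]
  refine sum_congr rfl fun j _ => ?_
  rw [← expNeg_pow_mul_rescale_exp, neg_pow, one_pow, mul_one, smul_eq_C_mul]
  simp only [map_mul, map_pow, map_neg, map_one, map_natCast]
  ring

lemma trunc_pbGF (k : ℤ) (N : ℕ) :
    trunc (N + 1) (pbGF k) =
      trunc (N + 1) (∑ m ∈ range (N + 1), (1 / ((m : ℝ) + 1) ^ k) • (1 - expNeg) ^ m) := by
  ext i
  rw [coeff_trunc, coeff_trunc]
  split_ifs with hi
  · simp only [map_sum, map_smul, smul_eq_mul, pbGF, coeff_mk]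
    exact sum_subset (range_subset_range.mpr (by omega)) fun m _ hm => by
      rw [coeff_one_sub_expNeg_pow_of_lt (by simpa using hm), mul_zero]
  · rfl

lemma pB_eq_sum_of_le (k : ℤ) {p N : ℕ} (hp : p ≤ N) (x : ℝ) :
    pB k p x = ∑ j ∈ range (N + 1),
      (∑ m ∈ Icc j N, (-1) ^ j * (m.choose j : ℝ) / ((m : ℝ) + 1) ^ k) * (x - j) ^ p := by
  have hpN : p < N + 1 := Nat.lt_succ_of_le hp
  rw [pB, coeff_mul_eq_coeff_trunc_mul_trunc _ _ hpN, trunc_pbGF,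
    ← coeff_mul_eq_coeff_trunc_mul_trunc _ _ hpN]
  simp only [sum_mul, smul_mul_assoc, one_sub_expNeg_pow_mul_rescale_exp, smul_sum, smul_smul,
    map_sum, map_smul, coeff_rescale_exp, smul_eq_mul, mul_sum]
  rw [sum_comm' (t' := range (N + 1)) (s' := fun j => Icc j N) fun m j => by
    simp only [mem_range, mem_Icc]; omega]
  refine sum_congr rfl fun j _ => sum_congr rfl fun m _ => ?_
  have : (p.factorial : ℝ) ≠ 0 := by positivity
  field_simp

lemma HB_eq_sum_choose_mul_pB (ν : ℝ) (k : ℤ) (n : ℕ) (x : ℝ) :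
    HB ν k n x = ∑ l ∈ range (n / 2 + 1),
      (n.choose (2 * l) : ℝ) * (2 * l).factorial / l.factorial * (-ν / 2) ^ l *
        pB k (n - 2 * l) x := by
  rw [HB, mul_assoc, coeff_mul, Nat.sum_antidiagonal_eq_sum_range_succ_mk, mul_sum,
    sum_range_succ_eq_sum_range_two_mul]
  · refine sum_congr rfl fun l hl => ?_
    have h2l : 2 * l ≤ n := by simp only [mem_range] at hl; omega
    rw [pB, hermGF, coeff_mk, if_pos (even_two_mul l), Nat.mul_div_cancel_left l two_pos,
      Nat.cast_choose ℝ h2l]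
    have : ((n - 2 * l).factorial : ℝ) ≠ 0 := by positivity
    field_simp
  · intro q hq
    rw [hermGF, coeff_mk, if_neg (Nat.not_even_iff_odd.mpr hq), zero_mul, mul_zero]

theorem HB_eq_sum_powers_general (ν : ℝ) (k : ℤ) (n : ℕ) (x : ℝ) :
    HB ν k n x = ∑ l ∈ Finset.range (n / 2 + 1), ∑ j ∈ Finset.range (n + 1),
      (∑ m ∈ Finset.Icc j n,
        (n.choose (2 * l) : ℝ) * (Nat.factorial (2 * l)) / (Nat.factorial l) *
          (-ν / 2) ^ l * ((-1) ^ j * (m.choose j : ℝ) / ((m : ℝ) + 1) ^ k)) *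
        (x - j) ^ (n - 2 * l) := by
  rw [HB_eq_sum_choose_mul_pB]
  refine sum_congr rfl fun l _ => ?_
  rw [pB_eq_sum_of_le k (Nat.sub_le n (2 * l)), mul_sum]
  simp only [← mul_sum, mul_assoc]

theorem HB_eq_sum_powers (ν : ℝ) (hν : ν ≠ 0) (k : ℤ) (n : ℕ) (x : ℝ) :
    HB ν k n x = ∑ l ∈ Finset.range (n / 2 + 1), ∑ j ∈ Finset.range (n + 1),
      (∑ m ∈ Finset.Icc j n,
        (n.choose (2 * l) : ℝ) * (Nat.factorial (2 * l)) / (Nat.factorial l) *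
          (-ν / 2) ^ l * ((-1) ^ j * (m.choose j : ℝ) / ((m : ℝ) + 1) ^ k)) *
        (x - j) ^ (n - 2 * l) :=
  HB_eq_sum_powers_general ν k n x
end

section
/- For all nonnegative integers n, HB_n^{(ν,k)}(x) = \sum_{j=0}^{n} \left( \sum_{l=0}^{\lfloor (n-j)/2 \rfloor} \binom{n}{j} \binom{n-j}{2l} \frac{(2l)!}{l!} (-ν/2)^l B_{n-j-2l}^{(k)} \right) x^j, where B_m^{(k)} = B_m^{(k)}(0) are the poly-Bernoulli numbers. -/
open PowerSeries Finset

/-!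
Since `e^{-νt²/2}` only has even coefficients `(-ν/2)^l / l!`, the coefficient of `t^m` in
`e^{-νt²/2} · Li_k(1-e^{-t})/(1-e^{-t})` is `∑_l (-ν/2)^l / l! · B_{m-2l}^{(k)} / (m-2l)!`.
Multiplying by `e^{xt}` and comparing coefficients of `t^n / n!` gives the formula, the binomial
factors coming from `n! = C(n,j) C(n-j,2l) (2l)! (n-j-2l)! j!`.
-/

open Nat

theorem Finset.sum_range_succ_ite_even {M : Type*} [AddCommMonoid M] (m : ℕ) (f : ℕ → M) :
    ∑ i ∈ range (m + 1), (if Even i then f (i / 2) else 0) = ∑ l ∈ range (m / 2 + 1), f l := by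
  induction m with
  | zero => simp
  | succ m ih =>
    rw [sum_range_succ, ih]
    rcases Nat.even_or_odd (m + 1) with h | h
    · rw [if_pos h, show (m + 1) / 2 = m / 2 + 1 by grind, sum_range_succ f (m / 2 + 1)]
    · rw [if_neg (Nat.not_even_iff_odd.mpr h), show (m + 1) / 2 = m / 2 by grind, add_zero]

theorem Nat.factorial_eq_choose_mul_choose {n j i : ℕ} (hj : j ≤ n) (hi : i ≤ n - j) :
    n ! = n.choose j * (n - j).choose i * i ! * (n - j - i)! * j ! := by
  rw [← Nat.choose_mul_factorial_mul_factorial hj,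
    ← Nat.choose_mul_factorial_mul_factorial hi]
  ring

theorem PowerSeries.coeff_rescale_exp (x : ℝ) (j : ℕ) :
    coeff j (rescale x (exp ℝ)) = x ^ j / j ! := by
  simp [coeff_rescale, coeff_exp, div_eq_mul_inv]

theorem coeff_hermGF_mul (ν : ℝ) (f : PowerSeries ℝ) (m : ℕ) :
    coeff m (hermGF ν * f) =
      ∑ l ∈ range (m / 2 + 1), (-ν / 2) ^ l / l ! * coeff (m - 2 * l) f := by
  rw [coeff_mul, Nat.sum_antidiagonal_eq_sum_range_succ_mk,
    ← sum_range_succ_ite_even m (fun l => (-ν / 2) ^ l / l ! * coeff (m - 2 * l) f)]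
  refine sum_congr rfl fun i _ => ?_
  rw [hermGF, coeff_mk]
  split_ifs with h
  · rw [Nat.two_mul_div_two_of_even h]
  · rw [zero_mul]

theorem pB_zero (k : ℤ) (m : ℕ) : pB k m 0 = m ! * coeff m (pbGF k) := by
  simp [pB, rescale_zero]

theorem HB_eq_sum_coeff_mul_pow (ν : ℝ) (k : ℤ) (n : ℕ) (x : ℝ) :
    HB ν k n x = ∑ j ∈ range (n + 1),
      n ! * coeff (n - j) (hermGF ν * pbGF k) * (x ^ j / j !) := by
  rw [HB, coeff_mul, Nat.sum_antidiagonal_eq_sum_range_succ_mk, ← sum_range_reflect, mul_sum]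
  refine sum_congr rfl fun j hj => ?_
  have hjn : j ≤ n := Nat.lt_succ_iff.mp (mem_range.mp hj)
  rw [show n + 1 - 1 - j = n - j by omega, show n - (n - j) = j by omega, coeff_rescale_exp,
    mul_assoc]

theorem HB_conjugate_representation_general (ν : ℝ) (k : ℤ) (n : ℕ) (x : ℝ) :
    HB ν k n x = ∑ j ∈ Finset.range (n + 1),
      (∑ l ∈ Finset.range ((n - j) / 2 + 1),
        (n.choose j : ℝ) * ((n - j).choose (2 * l) : ℝ) *
          (Nat.factorial (2 * l)) / (Nat.factorial l) * (-ν / 2) ^ l *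
          pB k (n - j - 2 * l) 0) * x ^ j := by
  rw [HB_eq_sum_coeff_mul_pow]
  refine sum_congr rfl fun j hj => ?_
  rw [coeff_hermGF_mul, mul_sum, sum_mul, sum_mul]
  refine sum_congr rfl fun l hl => ?_
  have hjn : j ≤ n := Nat.lt_succ_iff.mp (mem_range.mp hj)
  have hln : 2 * l ≤ n - j := by have := mem_range.mp hl; omega
  rw [pB_zero, Nat.factorial_eq_choose_mul_choose hjn hln]
  push_cast
  field_simp

theorem HB_conjugate_representation (ν : ℝ) (hν : ν ≠ 0) (k : ℤ) (n : ℕ) (x : ℝ) :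
    HB ν k n x = ∑ j ∈ Finset.range (n + 1),
      (∑ l ∈ Finset.range ((n - j) / 2 + 1),
        (n.choose j : ℝ) * ((n - j).choose (2 * l) : ℝ) *
          (Nat.factorial (2 * l)) / (Nat.factorial l) * (-ν / 2) ^ l *
          pB k (n - j - 2 * l) 0) * x ^ j :=
  HB_conjugate_representation_general ν k n x
end

section
/- For all nonnegative integers n, HB_{n+1}^{(ν,k)}(x) = x · HB_n^{(ν,k)}(x) − ν n HB_{n-1}^{(ν,k)}(x) − \frac{1}{n+1} \sum_{l=0}^{n+1} \binom{n+1}{l} B_l ( HB_{n+1-l}^{(ν,k)}(x) − HB_{n+1-l}^{(ν,k-1)}(x) ), where B_l are the ordinary Bernoulli numbers (with B_1 = -1/2) and the term with HB_{n-1} is read as 0 when n = 0. -/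
open PowerSeries Finset

/-!
Write `F_k = e^{-νt²/2} · f_k(1 - e^{-t}) · e^{xt}` with `f_k(y) = Li_k(y)/y = ∑ y^m/(m+1)^k`.
Coefficientwise `y f_k'(y) = f_{k-1}(y) - f_k(y)`, so by the chain rule the middle factor `P_k`
satisfies `(e^t - 1) P_k' = P_{k-1} - P_k`, and multiplying by `t/(e^t - 1) = ∑ B_l t^l/l!` gives
`t P_k' = B(t) (P_{k-1} - P_k)`. With the logarithmic derivatives `-νt` and `x` of the outer
factors this yields `t F_k' = x t F_k - ν t² F_k - B(t) (F_k - F_{k-1})`, whose coefficient of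
`t^{n+1}/(n+1)!` is `n + 1` times the recurrence.
-/

open scoped Nat

namespace PowerSeries

variable {R : Type*} [CommSemiring R]

theorem derivative_rescale (a : R) (f : R⟦X⟧) :
    d⁄dX R (rescale a f) = a • rescale a (d⁄dX R f) := by
  ext n
  simp only [coeff_derivative, coeff_rescale, coeff_smul, smul_eq_mul, pow_succ]
  ring

theorem derivative_rescale_exp {A : Type*} [CommRing A] [Algebra ℚ A] (a : A) :
    d⁄dX A (rescale a (exp A)) = a • rescale a (exp A) := by
  rw [derivative_rescale, derivative_exp]

variable (R) in
noncomputable def egfCoeff (n : ℕ) : R⟦X⟧ →ₗ[R] R := (n ! : R) • coeff n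

theorem egfCoeff_apply (n : ℕ) (f : R⟦X⟧) : egfCoeff R n f = n ! * coeff n f := rfl

theorem egfCoeff_X_mul_derivative (f : R⟦X⟧) (n : ℕ) :
    egfCoeff R n (X * d⁄dX R f) = n * egfCoeff R n f := by
  cases n with
  | zero => simp [egfCoeff_apply]
  | succ n =>
    rw [egfCoeff_apply, egfCoeff_apply, coeff_succ_X_mul, coeff_derivative]
    push_cast
    ring

theorem egfCoeff_succ_X_mul (f : R⟦X⟧) (n : ℕ) :
    egfCoeff R (n + 1) (X * f) = (n + 1) * egfCoeff R n f := by
  rw [egfCoeff_apply, egfCoeff_apply, coeff_succ_X_mul, Nat.factorial_succ]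
  push_cast
  ring

theorem egfCoeff_X_pow_mul (f : R⟦X⟧) (j n : ℕ) :
    egfCoeff R n (X ^ j * f) = n.descFactorial j * egfCoeff R (n - j) f := by
  rw [egfCoeff_apply, egfCoeff_apply, coeff_X_pow_mul']
  split_ifs with h
  · rw [← mul_assoc, ← Nat.cast_mul, mul_comm (n.descFactorial j),
      Nat.factorial_mul_descFactorial h]
  · simp [Nat.descFactorial_eq_zero_iff_lt.2 (not_le.1 h)]

theorem egfCoeff_mul (f g : R⟦X⟧) (n : ℕ) :
    egfCoeff R n (f * g) =
      ∑ l ∈ range (n + 1), n.choose l * egfCoeff R l f * egfCoeff R (n - l) g := by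
  rw [egfCoeff_apply, coeff_mul, Nat.sum_antidiagonal_eq_sum_range_succ_mk, mul_sum]
  refine sum_congr rfl fun l hl => ?_
  rw [egfCoeff_apply, egfCoeff_apply,
    ← Nat.choose_mul_factorial_mul_factorial (Nat.lt_succ_iff.1 (mem_range.1 hl))]
  push_cast
  ring

theorem egfCoeff_bernoulliPowerSeries {A : Type*} [CommRing A] [Algebra ℚ A] (n : ℕ) :
    egfCoeff A n (bernoulliPowerSeries A) = algebraMap ℚ A (bernoulli n) := by
  rw [egfCoeff_apply, bernoulliPowerSeries, coeff_mk, div_eq_mul_inv, map_mul, mul_left_comm,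
    ← map_natCast (algebraMap ℚ A), ← map_mul, mul_inv_cancel₀ (by positivity), map_one, mul_one]

end PowerSeries

-- `Li_k(y) / y`
noncomputable def polylogDivSeries (k : ℤ) : ℝ⟦X⟧ :=
  mk fun m => 1 / ((m : ℝ) + 1) ^ k

theorem X_mul_derivative_polylogDivSeries (k : ℤ) :
    X * d⁄dX ℝ (polylogDivSeries k) = polylogDivSeries (k - 1) - polylogDivSeries k := by
  ext m
  cases m with
  | zero => simp [polylogDivSeries]
  | succ m =>
    have hm : ((m : ℝ) + 1 + 1) ≠ 0 := by positivity
    simp only [coeff_succ_X_mul, coeff_derivative, polylogDivSeries, coeff_mk, map_sub]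
    push_cast
    rw [zpow_sub₀ hm, zpow_one]
    field_simp
    ring

theorem expNeg_mul_exp : expNeg * exp ℝ = 1 := by
  rw [expNeg, mul_comm]
  exact exp_mul_exp_neg_eq_one

theorem derivative_expNeg : d⁄dX ℝ expNeg = -expNeg := by
  rw [expNeg, derivative_rescale_exp, neg_one_smul]

theorem constantCoeff_one_sub_expNeg : constantCoeff (1 - expNeg) = 0 := by
  rw [map_sub, map_one, ← coeff_zero_eq_constantCoeff_apply, expNeg, coeff_rescale, coeff_exp]
  simp

theorem hasSubst_one_sub_expNeg : HasSubst (1 - expNeg) :=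
  HasSubst.of_constantCoeff_zero' constantCoeff_one_sub_expNeg

theorem pbGF_eq_subst (k : ℤ) : pbGF k = (polylogDivSeries k).subst (1 - expNeg) := by
  ext n
  rw [pbGF, coeff_mk, coeff_subst' hasSubst_one_sub_expNeg,
    finsum_eq_sum_of_support_subset (s := range (n + 1))]
  · simp [polylogDivSeries]
  · intro d hd
    by_contra hdn
    have hlt : (n : ℕ∞) < d := by exact_mod_cast not_lt.1 (fun h => hdn (mem_range.2 h))
    refine hd ?_
    dsimp only
    rw [coeff_of_lt_order n (hlt.trans_le (le_order_pow_of_constantCoeff_eq_zero d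
      constantCoeff_one_sub_expNeg)), smul_zero]

theorem exp_sub_one_mul_derivative_pbGF (k : ℤ) :
    (exp ℝ - 1) * d⁄dX ℝ (pbGF k) = pbGF (k - 1) - pbGF k := by
  have h := hasSubst_one_sub_expNeg
  simp only [pbGF_eq_subst]
  rw [derivative_subst h, ← subst_sub h, ← X_mul_derivative_polylogDivSeries, subst_mul h,
    subst_X h, map_sub, derivative_expNeg, Derivation.map_one_eq_zero, zero_sub, neg_neg]
  linear_combination subst (1 - expNeg) (d⁄dX ℝ (polylogDivSeries k)) * expNeg_mul_exp

theorem X_mul_derivative_pbGF (k : ℤ) :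
    X * d⁄dX ℝ (pbGF k) = bernoulliPowerSeries ℝ * (pbGF (k - 1) - pbGF k) := by
  rw [← exp_sub_one_mul_derivative_pbGF, ← mul_assoc, bernoulliPowerSeries_mul_exp_sub_one]

theorem hermGF_eq_subst (ν : ℝ) :
    hermGF ν = (rescale (-ν / 2) (exp ℝ)).subst (X ^ 2 : ℝ⟦X⟧) := by
  ext n
  rw [hermGF, coeff_mk, coeff_subst_X_pow two_ne_zero, coeff_rescale, coeff_exp]
  simp [even_iff_two_dvd, div_eq_mul_inv]

theorem derivative_hermGF (ν : ℝ) : d⁄dX ℝ (hermGF ν) = -ν • (X * hermGF ν) := by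
  have h : HasSubst (X ^ 2 : ℝ⟦X⟧) := HasSubst.X_pow two_ne_zero
  rw [hermGF_eq_subst, derivative_subst h, derivative_rescale_exp, subst_smul h,
    derivative_pow, derivative_X]
  have h2 : C (-ν) = C (-ν / 2) * (2 : ℝ⟦X⟧) := by
    rw [← map_ofNat C 2, ← map_mul]
    ring_nf
  simp only [smul_eq_C_mul, h2]
  push_cast
  ring

noncomputable def hbGF (ν : ℝ) (k : ℤ) (x : ℝ) : ℝ⟦X⟧ :=
  hermGF ν * pbGF k * rescale x (exp ℝ)

theorem HB_eq_egfCoeff (ν : ℝ) (k : ℤ) (n : ℕ) (x : ℝ) :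
    HB ν k n x = egfCoeff ℝ n (hbGF ν k x) :=
  rfl

theorem X_mul_derivative_hbGF (ν : ℝ) (k : ℤ) (x : ℝ) :
    X * d⁄dX ℝ (hbGF ν k x) = x • (X * hbGF ν k x) - ν • (X ^ 2 * hbGF ν k x) -
      bernoulliPowerSeries ℝ * (hbGF ν k x - hbGF ν (k - 1) x) := by
  rw [hbGF, hbGF, Derivation.leibniz, Derivation.leibniz, derivative_hermGF,
    derivative_rescale_exp]
  simp only [smul_eq_mul, smul_eq_C_mul, map_neg]
  linear_combination hermGF ν * rescale x (exp ℝ) * X_mul_derivative_pbGF k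

theorem HB_recurrence_general (ν : ℝ) (k : ℤ) (n : ℕ) (x : ℝ) :
    HB ν k (n + 1) x = x * HB ν k n x - ν * n * HB ν k (n - 1) x -
      (1 / ((n : ℝ) + 1)) * ∑ l ∈ Finset.range (n + 2),
        ((n + 1).choose l : ℝ) * (bernoulli l : ℝ) *
          (HB ν k (n + 1 - l) x - HB ν (k - 1) (n + 1 - l) x) := by
  have h := congrArg (egfCoeff ℝ (n + 1)) (X_mul_derivative_hbGF ν k x)
  rw [map_sub, map_sub, map_smul, map_smul, egfCoeff_X_mul_derivative, egfCoeff_succ_X_mul,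
    egfCoeff_X_pow_mul, egfCoeff_mul, smul_eq_mul, smul_eq_mul,
    show n + 1 - 2 = n - 1 by omega, Nat.succ_descFactorial_succ, Nat.descFactorial_one] at h
  simp only [egfCoeff_bernoulliPowerSeries, eq_ratCast, map_sub] at h
  simp only [HB_eq_egfCoeff]
  push_cast at h
  field_simp
  linear_combination h

theorem HB_recurrence (ν : ℝ) (hν : ν ≠ 0) (k : ℤ) (n : ℕ) (x : ℝ) :
    HB ν k (n + 1) x = x * HB ν k n x - ν * n * HB ν k (n - 1) x -
      (1 / ((n : ℝ) + 1)) * ∑ l ∈ Finset.range (n + 2),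
        ((n + 1).choose l : ℝ) * (bernoulli l : ℝ) *
          (HB ν k (n + 1 - l) x - HB ν (k - 1) (n + 1 - l) x) :=
  HB_recurrence_general ν k n x
end

section
/- For all nonnegative integers n and r, HB_n^{(ν,k)}(x) = \sum_{m=0}^{n} \left( \binom{n}{m} \sum_{l=0}^{n-m} \frac{\binom{n-m}{l}}{\binom{l+r}{r}} S_2(l+r,r) HB_{n-m-l}^{(ν,k)} \right) \mathbb{B}_m^{(r)}(x), where \mathbb{B}_m^{(r)}(x) are the Bernoulli polynomials of order r and S_2 the Stirling numbers of the second kind. -/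
open PowerSeries Finset

/-- Bernoulli polynomials of order r, via the generating function (t/(e^t-1))^r e^{xt};
here `PowerSeries.mk fun i => 1/(i+1)!` is the series (e^t-1)/t. -/
noncomputable def bernPoly (r : ℕ) (n : ℕ) (x : ℝ) : ℝ :=
  (Nat.factorial n) * PowerSeries.coeff n
    ((PowerSeries.mk fun i => (1 : ℝ) / (Nat.factorial (i + 1)))⁻¹ ^ r *
      rescale x (PowerSeries.exp ℝ))
/-! With `M = (eᵗ - 1)/t`, the generating function of `HB(x)` factors as
`(M⁻ʳ e^{xt}) · (Mʳ F)`, where `F` generates the numbers `HB_m = HB(0)` and the first factor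
generates the Bernoulli polynomials of order `r`. Since `tʳ Mʳ = (eᵗ - 1)ʳ` is `r!` times the
exponential generating function of `S₂(·, r)`, the `l`-th coefficient of `Mʳ` is
`S₂(l + r, r) / (l! (l + r choose r))`. Two binomial convolutions of exponential coefficients
then give the formula. -/

open scoped Nat

section BinomialConvolution

variable {R : Type*} [CommSemiring R]

theorem factorial_mul_coeff_mul (f g : R⟦X⟧) (n : ℕ) :
    (n ! : R) * coeff n (f * g) = ∑ m ∈ range (n + 1),
      (n.choose m : R) * ((m ! * coeff m f) * ((n - m)! * coeff (n - m) g)) := by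
  rw [coeff_mul, Nat.sum_antidiagonal_eq_sum_range_succ_mk, mul_sum]
  refine sum_congr rfl fun m hm => ?_
  have hfact : (n.choose m : R) * m ! * (n - m)! = n ! := by
    exact_mod_cast congrArg (Nat.cast : ℕ → R)
      (Nat.choose_mul_factorial_mul_factorial (Nat.lt_succ_iff.mp (mem_range.mp hm)))
  rw [← hfact]
  ring

end BinomialConvolution

section Stirling

variable (A : Type*) [CommRing A] [Algebra ℚ A]

theorem derivative_exp_sub_one_pow_succ (r : ℕ) :
    d⁄dX A ((exp A - 1) ^ (r + 1)) = (r + 1) • ((exp A - 1) ^ (r + 1) + (exp A - 1) ^ r) := by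
  rw [Derivation.leibniz_pow, Derivation.map_sub, derivative_exp, Derivation.map_one_eq_zero,
    sub_zero, Nat.add_sub_cancel, smul_eq_mul, ← smul_mul_assoc]
  ring_nf

theorem factorial_mul_coeff_exp_sub_one_pow (n r : ℕ) :
    (n ! : A) * coeff n ((exp A - 1) ^ r) = r ! * S2 n r := by
  induction n generalizing r with
  | zero => cases r <;> simp [S2]
  | succ n ih =>
    cases r with
    | zero => simp [S2, coeff_one]
    | succ r =>
      have hcoeff := congrArg (coeff n) (derivative_exp_sub_one_pow_succ A r)
      rw [coeff_derivative, map_nsmul, map_add] at hcoeff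
      calc ((n + 1)! : A) * coeff (n + 1) ((exp A - 1) ^ (r + 1))
          = n ! * (coeff (n + 1) ((exp A - 1) ^ (r + 1)) * (n + 1)) := by
            push_cast [Nat.factorial_succ]; ring
        _ = (r + 1) *
              (n ! * coeff n ((exp A - 1) ^ (r + 1)) + n ! * coeff n ((exp A - 1) ^ r)) := by
            rw [hcoeff, nsmul_eq_mul]; push_cast; ring
        _ = ((r + 1)! : A) * S2 (n + 1) (r + 1) := by
            rw [ih, ih, S2, Nat.factorial_succ]; push_cast; ring

end Stirling

section ExpSubOneDivX

variable (K : Type*) [Field K]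

noncomputable def expSubOneDivX : K⟦X⟧ := mk fun i => 1 / ((i + 1)! : K)

theorem constantCoeff_expSubOneDivX : constantCoeff (expSubOneDivX K) = 1 := by
  simp [expSubOneDivX]

variable [CharZero K]

theorem X_mul_expSubOneDivX : X * expSubOneDivX K = exp K - 1 := by
  ext n
  cases n with
  | zero => simp [expSubOneDivX]
  | succ n => simp [coeff_succ_X_mul, expSubOneDivX, coeff_exp, coeff_one]

theorem factorial_mul_coeff_expSubOneDivX_pow (l r : ℕ) :
    (l ! : K) * coeff l (expSubOneDivX K ^ r) = S2 (l + r) r / (l + r).choose r := by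
  have hshift : coeff (l + r) ((exp K - 1) ^ r) = coeff l (expSubOneDivX K ^ r) := by
    rw [← X_mul_expSubOneDivX, mul_pow, coeff_X_pow_mul]
  have hstirling := factorial_mul_coeff_exp_sub_one_pow K (l + r) r
  have hchoose : ((l + r).choose r : K) * r ! * l ! = (l + r)! := by
    have h := Nat.choose_mul_factorial_mul_factorial (Nat.le_add_left r l)
    rw [Nat.add_sub_cancel] at h
    exact_mod_cast h
  rw [hshift, ← hchoose] at hstirling
  have hchoose_ne : ((l + r).choose r : K) ≠ 0 :=
    Nat.cast_ne_zero.2 (Nat.choose_pos (Nat.le_add_left r l)).ne'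
  rw [eq_div_iff hchoose_ne]
  apply mul_left_cancel₀ (Nat.cast_ne_zero.2 (Nat.factorial_ne_zero r) : (r ! : K) ≠ 0)
  linear_combination hstirling

theorem factorial_mul_coeff_expSubOneDivX_pow_mul (F : K⟦X⟧) (j r : ℕ) :
    (j ! : K) * coeff j (expSubOneDivX K ^ r * F) = ∑ l ∈ range (j + 1),
      ((j.choose l : K) / (l + r).choose r) * S2 (l + r) r * ((j - l)! * coeff (j - l) F) := by
  rw [factorial_mul_coeff_mul]
  refine sum_congr rfl fun l _ => ?_
  rw [factorial_mul_coeff_expSubOneDivX_pow]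
  ring

end ExpSubOneDivX

theorem HB_at_zero (ν : ℝ) (k : ℤ) (n : ℕ) :
    HB ν k n 0 = n ! * coeff n (hermGF ν * pbGF k) := by
  simp [HB, rescale_zero]

theorem bernPoly_eq_factorial_mul_coeff (r m : ℕ) (x : ℝ) :
    bernPoly r m x = m ! * coeff m ((expSubOneDivX ℝ)⁻¹ ^ r * rescale x (exp ℝ)) := rfl

theorem HB_eq_sum_bernoulli_order_general (ν : ℝ) (k : ℤ) (n r : ℕ) (x : ℝ) :
    HB ν k n x = ∑ m ∈ Finset.range (n + 1),
      ((n.choose m : ℝ) * ∑ l ∈ Finset.range (n - m + 1),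
        (((n - m).choose l : ℝ) / ((l + r).choose r : ℝ)) * (S2 (l + r) r : ℝ) *
          HB ν k (n - m - l) 0) * bernPoly r m x := by
  have hsplit : hermGF ν * pbGF k * rescale x (exp ℝ) =
      ((expSubOneDivX ℝ)⁻¹ ^ r * rescale x (exp ℝ)) *
        (expSubOneDivX ℝ ^ r * (hermGF ν * pbGF k)) := by
    have hinv : expSubOneDivX ℝ ^ r * (expSubOneDivX ℝ)⁻¹ ^ r = 1 := by
      rw [← mul_pow, PowerSeries.mul_inv_cancel _ (by simp [constantCoeff_expSubOneDivX]),
        one_pow]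
    linear_combination (hermGF ν * pbGF k * rescale x (exp ℝ)) * hinv.symm
  rw [HB, hsplit, factorial_mul_coeff_mul]
  refine sum_congr rfl fun m _ => ?_
  rw [bernPoly_eq_factorial_mul_coeff, factorial_mul_coeff_expSubOneDivX_pow_mul]
  simp only [HB_at_zero]
  ring

theorem HB_eq_sum_bernoulli_order (ν : ℝ) (hν : ν ≠ 0) (k : ℤ) (n r : ℕ) (x : ℝ) :
    HB ν k n x = ∑ m ∈ Finset.range (n + 1),
      ((n.choose m : ℝ) * ∑ l ∈ Finset.range (n - m + 1),
        (((n - m).choose l : ℝ) / ((l + r).choose r : ℝ)) * (S2 (l + r) r : ℝ) *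
          HB ν k (n - m - l) 0) * bernPoly r m x :=
  HB_eq_sum_bernoulli_order_general ν k n r x
end
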